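/- Let G be a simple graph on a finite vertex type and let v be a vertex of G. Then the characteristic polynomial of the adjacency matrix satisfies φ(A(G)) = x·φ(A(G − v)) − Σ_{u ∈ N(v)} φ(A(G − u − v)) − 2·Σ_{C ∈ 𝔠_G(v)} φ(A(G − V(C))), where G − S denotes the subgraph of G induced on the vertices outside S. -/

import Mathlib

open Polynomial Matrix

attribute [local instance] Classical.propDecidable

noncomputable section

/-- The permanent of a square matrix: `per M = ∑_{σ} ∏_i M i (σ i)`. -/
def Matrix.per {n R : Type*} [Fintype n] [DecidableEq n] [CommRing R]
    (M : Matrix n n R) : R :=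
  ∑ σ : Equiv.Perm n, ∏ i, M i (σ i)

/-- The characteristic polynomial `φ(M) = det (x·I - M)`. -/
def phi {n R : Type*} [Fintype n] [DecidableEq n] [CommRing R]
    (M : Matrix n n (Polynomial R)) : Polynomial R :=
  ((Polynomial.X : Polynomial R) • (1 : Matrix n n (Polynomial R)) - M).det

/-- The permanental polynomial `ψ(M) = per (x·I - M)`. -/
def psi {n R : Type*} [Fintype n] [DecidableEq n] [CommRing R]
    (M : Matrix n n (Polynomial R)) : Polynomial R :=
  ((Polynomial.X : Polynomial R) • (1 : Matrix n n (Polynomial R)) - M).per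

variable {V : Type*}

/-- The principal submatrix of `M` obtained by deleting the rows and columns indexed by `S`. -/
def delSub {R : Type*} (M : Matrix V V R) (S : Set V) :
    Matrix {w : V // w ∉ S} {w : V // w ∉ S} R :=
  M.submatrix Subtype.val Subtype.val

/-- `C` is a cycle of `G`: a subgraph of `G` that is connected, has nonempty vertex set,
and in which every vertex of `C` has degree exactly `2` in `C`. -/
def IsCycleSub (G : SimpleGraph V) (C : G.Subgraph) : Prop :=
  C.Connected ∧ C.verts.Nonempty ∧ ∀ w ∈ C.verts, (C.neighborSet w).ncard = 2

variable [Fintype V] [DecidableEq V]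

/-- The degree diagonal matrix `D(G)` of a graph. -/
def degMat (R : Type*) [CommRing R] (G : SimpleGraph V) [DecidableRel G.Adj] :
    Matrix V V R :=
  Matrix.diagonal fun w => (G.degree w : R)

/-!
Expand `det (x·I - A)` over permutations and group them by their cycle through `v`. The
permutations whose cycle through `v` is `c` are `c` times the permutations of the remaining
vertices, so this fibre contributes `sign c · ∏ (x·I - A) (c i) i · φ(A(G - V(c)))`. The trivial
cycle gives `x φ(G - v)`. A genuine cycle `c` contributes `-φ(G - V(c))` when it moves every
vertex along an edge of `G` and `0` otherwise: the transpositions `(v u)` give the neighbour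
terms, and every cycle subgraph of `G` through `v` arises from exactly two longer cycles, its
two orientations.
-/

open Finset

namespace Equiv.Perm

variable {α : Type*} [Fintype α] [DecidableEq α]

theorem IsCycle.sign_mul_prod_neg {R : Type*} [CommRing R] {c : Perm α} (hc : c.IsCycle)
    (f : α → R) : ((Perm.sign c : ℤ) : R) * ∏ i ∈ c.support, -f i = -∏ i ∈ c.support, f i := by
  have hsq : ((-1 : R) ^ #c.support) * (-1) ^ #c.support = 1 := by rw [← mul_pow]; simp
  rw [hc.sign, prod_neg]
  push_cast
  linear_combination (-∏ i ∈ c.support, f i) * hsq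

theorem IsCycle.apply_apply_ne {c : Perm α} (hc : c.IsCycle) (h3 : 3 ≤ #c.support) {x : α}
    (hx : x ∈ c.support) : c (c x) ≠ x := by
  intro h
  have hsq : c ^ 2 = 1 := (hc.pow_eq_one_iff' (mem_support.mp hx)).mpr (by rwa [sq, mul_apply])
  have := orderOf_le_of_pow_eq_one two_pos hsq
  rw [hc.orderOf] at this
  omega

theorem cycleOf_eq_self_iff {c : Perm α} {v : α} :
    c.cycleOf v = c ↔ c = 1 ∨ c.IsCycle ∧ v ∈ c.support := by
  constructor
  · intro h
    by_cases hv : c v = v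
    · exact Or.inl (h ▸ (cycleOf_eq_one_iff c).mpr hv)
    · exact Or.inr ⟨h ▸ isCycle_cycleOf c hv, mem_support.mpr hv⟩
  · rintro (rfl | ⟨hc, hv⟩)
    · exact cycleOf_one v
    · exact hc.cycleOf_eq (mem_support.mp hv)

theorem apply_eq_of_cycleOf_eq {σ c : Perm α} {v : α} (h : σ.cycleOf v = c) :
    ∀ x ∈ insert v c.support, σ x = c x := by
  subst h
  intro x hx
  rcases mem_insert.mp hx with rfl | hx
  · exact (cycleOf_apply_self σ x).symm
  · exact ((mem_support_cycleOf_iff.mp hx).1.cycleOf_apply).symm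

theorem cycleOf_mul_ofSubtype {c : Perm α} {v : α} (hc : c.cycleOf v = c)
    (τ : Perm {x // x ∉ (↑(insert v c.support) : Set α)}) :
    (c * ofSubtype τ).cycleOf v = c := by
  have hdisj : c.Disjoint (ofSubtype τ) := fun x => by
    by_cases hx : x ∈ insert v c.support
    · exact Or.inr (ofSubtype_apply_of_not_mem τ (not_not.mpr hx))
    · exact Or.inl (notMem_support.mp fun h => hx (mem_insert_of_mem h))
  rw [hdisj.cycleOf_mul_distrib, hc, (cycleOf_eq_one_iff _).mpr, mul_one]
  exact ofSubtype_apply_of_not_mem τ (by simp)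

theorem sum_filter_cycleOf_eq {M : Type*} [AddCommMonoid M] {c : Perm α} {v : α}
    (hc : c.cycleOf v = c) (f : Perm α → M) :
    ∑ σ with σ.cycleOf v = c, f σ =
      ∑ τ : Perm {x // x ∉ (↑(insert v c.support) : Set α)}, f (c * ofSubtype τ) := by
  symm
  refine sum_bij (fun τ _ => c * ofSubtype τ) (fun τ _ => ?_) (fun τ _ τ' _ h => ?_)
    (fun σ hσ => ?_) (fun _ _ => rfl)
  · simpa using cycleOf_mul_ofSubtype hc τ
  · exact ofSubtype_injective (mul_left_cancel h)
  · have hfix : ∀ x, ¬ x ∉ (↑(insert v c.support) : Set α) → (c⁻¹ * σ) x = x := fun x hx => by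
      rw [mul_apply, apply_eq_of_cycleOf_eq (mem_filter.mp hσ).2 x
        (mem_coe.mp (not_not.mp hx)), ← mul_apply, inv_mul_cancel, one_apply]
    obtain ⟨τ, hτ⟩ := (Perm.subtypeEquivSubtypePerm _).surjective ⟨c⁻¹ * σ, hfix⟩
    refine ⟨τ, mem_univ _, ?_⟩
    rw [show ofSubtype τ = c⁻¹ * σ from congrArg Subtype.val hτ, mul_inv_cancel_left]

end Equiv.Perm

namespace Matrix

open Equiv Perm

variable {n R : Type*} [DecidableEq n] [CommRing R]

theorem det_delSub_congr (M : Matrix n n R) {S S' : Set n} (h : S = S')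
    [Fintype {x // x ∉ S}] [Fintype {x // x ∉ S'}] :
    (delSub M S).det = (delSub M S').det := by
  subst h
  congr!

/-- The `Fintype` instances are implicit arguments, to be found by unification: elaboration picks
different instances on `{x // x ∉ S}` depending on how `S` is written. -/
theorem phi_delSub_congr (A : Matrix n n R[X]) {S S' : Set n} (h : S = S')
    {_ : Fintype {x // x ∉ S}} {_ : Fintype {x // x ∉ S'}} :
    phi (delSub A S) = phi (delSub A S') := by
  subst h
  congr!

theorem phi_delSub (A : Matrix n n R[X]) (S : Set n) [Fintype {x // x ∉ S}] :
    phi (delSub A S) = (delSub ((X : R[X]) • (1 : Matrix n n R[X]) - A) S).det := by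
  rw [phi]
  congr 1
  ext i j
  simp [delSub, one_apply, Subtype.ext_iff]

variable [Fintype n]

theorem sign_mul_prod_mul_ofSubtype (M : Matrix n n R) {c : Perm n} {O : Finset n}
    (hO : c.support ⊆ O) (τ : Perm {x // x ∉ (↑O : Set n)}) :
    ((sign (c * ofSubtype τ) : ℤ) : R) * ∏ i, M ((c * ofSubtype τ) i) i =
      ((sign c : ℤ) : R) * (∏ i ∈ O, M (c i) i) *
        (((sign τ : ℤ) : R) * ∏ j, delSub M ↑O (τ j) j) := by
  have hin : ∀ i ∈ O, (c * ofSubtype τ) i = c i := fun i hi => by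
    rw [Perm.mul_apply, ofSubtype_apply_of_not_mem τ (by simpa using hi)]
  have hout : ∏ i ∈ Oᶜ, M ((c * ofSubtype τ) i) i = ∏ j, delSub M ↑O (τ j) j := by
    rw [prod_subtype Oᶜ (p := fun x => x ∉ (↑O : Set n)) (by simp)]
    refine prod_congr rfl fun j _ => ?_
    rw [Perm.mul_apply, ofSubtype_apply_coe,
      notMem_support.mp fun h => (τ j).2 (mem_coe.mpr (hO h))]
    rfl
  rw [← prod_mul_prod_compl O, prod_congr rfl fun i hi => by rw [hin i hi], hout,
    Perm.sign_mul, sign_ofSubtype]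
  push_cast
  ring

theorem det_eq_sum_cycleOf (M : Matrix n n R) (v : n) :
    M.det = ∑ c : Perm n with c.cycleOf v = c,
      ((sign c : ℤ) : R) * (∏ i ∈ insert v c.support, M (c i) i) *
        (delSub M ↑(insert v c.support)).det := by
  have hmaps : ∀ σ ∈ (univ : Finset (Perm n)),
      σ.cycleOf v ∈ univ.filter fun c : Perm n => c.cycleOf v = c := fun σ _ => by
    simp only [mem_filter, mem_univ, true_and]
    by_cases h : σ v = v
    · rw [(cycleOf_eq_one_iff σ).mpr h, cycleOf_one]
    · exact (isCycle_cycleOf σ h).cycleOf_eq (by rwa [cycleOf_apply_self])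
  rw [det_apply', ← sum_fiberwise_of_maps_to hmaps]
  refine sum_congr rfl fun c hc => ?_
  rw [sum_filter_cycleOf_eq (mem_filter.mp hc).2, det_apply', mul_sum]
  exact sum_congr rfl fun τ _ => sign_mul_prod_mul_ofSubtype M (subset_insert v c.support) τ

theorem det_eq_mul_det_add_sum_isCycle (M : Matrix n n R) (v : n) :
    M.det = M v v * (delSub M {v}).det +
      ∑ c : Perm n with c.IsCycle ∧ v ∈ c.support,
        ((sign c : ℤ) : R) * (∏ i ∈ c.support, M (c i) i) * (delSub M ↑c.support).det := by
  have hsplit : (univ.filter fun c : Perm n => c.cycleOf v = c) =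
      insert 1 (univ.filter fun c : Perm n => c.IsCycle ∧ v ∈ c.support) := by
    ext c
    simp [cycleOf_eq_self_iff]
  rw [det_eq_sum_cycleOf, hsplit, sum_insert (by simp [not_isCycle_one])]
  congr 1
  · rw [det_delSub_congr M (S' := {v}) (by simp)]
    simp
  · refine sum_congr rfl fun c hc => ?_
    rw [insert_eq_of_mem (mem_filter.mp hc).2.2]

theorem sign_mul_prod_smul_one_sub {c : Perm n} (hc : c.IsCycle) (t : R) (A : Matrix n n R) :
    ((sign c : ℤ) : R) * ∏ i ∈ c.support, (t • (1 : Matrix n n R) - A) (c i) i =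
      -∏ i ∈ c.support, A (c i) i := by
  rw [← hc.sign_mul_prod_neg]
  congr 1
  refine prod_congr rfl fun i hi => ?_
  rw [sub_apply, smul_apply, one_apply_ne (mem_support.mp hi), smul_zero, zero_sub]

theorem phi_eq_sub_sum_isCycle (A : Matrix n n R[X]) (v : n) :
    phi A = (X - A v v) * phi (delSub A {v}) -
      ∑ c : Perm n with c.IsCycle ∧ v ∈ c.support,
        (∏ i ∈ c.support, A (c i) i) * phi (delSub A ↑c.support) := by
  rw [show phi A = ((X : R[X]) • (1 : Matrix n n R[X]) - A).det from rfl,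
    det_eq_mul_det_add_sum_isCycle _ v, sub_eq_add_neg ((X - A v v) * _), ← sum_neg_distrib]
  congr 1
  · rw [phi_delSub, sub_apply, smul_apply, one_apply_eq, smul_eq_mul, mul_one]
  · refine sum_congr rfl fun c hc => ?_
    rw [sign_mul_prod_smul_one_sub (mem_filter.mp hc).2.1, phi_delSub, neg_mul]

end Matrix

namespace SimpleGraph

section

variable {W : Type*} {H : SimpleGraph W}

theorem Subgraph.eq_of_le_of_ncard_neighborSet_le [Finite W] {C D : H.Subgraph} (hDC : D ≤ C)
    (hC : C.Connected) (hD : D.verts.Nonempty)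
    (hdeg : ∀ w ∈ D.verts, (C.neighborSet w).ncard ≤ (D.neighborSet w).ncard) : D = C := by
  have hnbr : ∀ w ∈ D.verts, D.neighborSet w = C.neighborSet w := fun w hw =>
    Set.eq_of_subset_of_ncard_le (Subgraph.neighborSet_subset_of_subgraph hDC w) (hdeg w hw)
      (Set.toFinite _)
  have hadj : ∀ {a b : W}, a ∈ D.verts → C.Adj a b → D.Adj a b := fun {a b} ha hab =>
    (show b ∈ D.neighborSet a from hnbr a ha ▸ hab)
  have hclosed : ∀ {a b : C.verts}, C.coe.Walk a b → (a : W) ∈ D.verts → (b : W) ∈ D.verts := by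
    intro a b p
    induction p with
    | nil => exact id
    | cons hab _ ih => exact fun ha => ih (hadj ha hab).snd_mem
  have hverts : C.verts ⊆ D.verts := fun x hx => by
    obtain ⟨d, hd⟩ := hD
    exact hclosed (hC ⟨d, hDC.1 hd⟩ ⟨x, hx⟩).some hd
  exact le_antisymm hDC ⟨hverts, fun a b hab => hadj (hverts hab.fst_mem) hab⟩

theorem Walk.IsCycle.adj_formPerm_support_tail [DecidableEq W] {u : W} {p : H.Walk u u}
    (hp : p.IsCycle) : ∀ x ∈ p.support.tail, H.Adj x (p.support.tail.formPerm x) := by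
  intro x hx
  obtain ⟨i, hi, rfl⟩ := List.getElem_of_mem hx
  have hlen : p.support.tail.length = p.length := by simp
  rw [List.formPerm_apply_getElem _ hp.support_nodup]
  simp only [List.getElem_tail, Walk.support_getElem_eq_getVert]
  rw [hlen] at hi ⊢
  rcases (show i + 1 ≤ p.length by omega).lt_or_eq with h | h
  · rw [Nat.mod_eq_of_lt h]
    exact p.adj_getVert_succ h
  · rw [h, Nat.mod_self, Walk.getVert_length]
    simpa using p.adj_getVert_succ (i := 0) (by omega)

end

open Equiv Perm

variable (G : SimpleGraph V)

def subgraphOfPerm (c : Perm V) : G.Subgraph where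
  verts := c.support
  Adj a b := G.Adj a b ∧ (c a = b ∨ c b = a)
  adj_sub h := h.1
  edge_vert {a b} h := by
    rcases h with ⟨hab, rfl | rfl⟩
    · exact Perm.mem_support.mpr hab.ne'
    · exact apply_mem_support.mpr (Perm.mem_support.mpr hab.ne)
  symm := ⟨fun _ _ h => ⟨h.1.symm, h.2.symm⟩⟩

def cyclicPermsThrough (v : V) : Finset (Perm V) :=
  {c | c.IsCycle ∧ v ∈ c.support ∧ 3 ≤ #c.support ∧ ∀ x ∈ c.support, G.Adj x (c x)}

variable {G} {v : V}

theorem mem_cyclicPermsThrough {c : Perm V} :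
    c ∈ G.cyclicPermsThrough v ↔
      c.IsCycle ∧ v ∈ c.support ∧ 3 ≤ #c.support ∧ ∀ x ∈ c.support, G.Adj x (c x) := by
  simp [cyclicPermsThrough]

theorem inv_mem_cyclicPermsThrough {c : Perm V} (hc : c ∈ G.cyclicPermsThrough v) :
    c⁻¹ ∈ G.cyclicPermsThrough v := by
  obtain ⟨hcyc, hv, h3, hG⟩ := mem_cyclicPermsThrough.mp hc
  refine mem_cyclicPermsThrough.mpr ⟨hcyc.inv, by rwa [support_inv], by rwa [support_inv],
    fun x hx => ?_⟩
  have hx' : c⁻¹ x ∈ c.support := by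
    rw [← support_inv]
    exact apply_mem_support.mpr hx
  simpa using (hG _ hx').symm

theorem subgraphOfPerm_inv (c : Perm V) : G.subgraphOfPerm c⁻¹ = G.subgraphOfPerm c := by
  ext a b
  · simp [subgraphOfPerm]
  · simp only [subgraphOfPerm]
    rw [Perm.inv_eq_iff_eq, Perm.inv_eq_iff_eq, eq_comm (a := a), eq_comm (a := b), or_comm]

theorem neighborSet_subgraphOfPerm {c : Perm V} (hG : ∀ x ∈ c.support, G.Adj x (c x)) {w : V}
    (hw : w ∈ c.support) : (G.subgraphOfPerm c).neighborSet w = {c w, c⁻¹ w} := by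
  ext x
  simp only [Subgraph.mem_neighborSet, subgraphOfPerm, Set.mem_insert_iff,
    Set.mem_singleton_iff, eq_comm (a := x)]
  rw [Perm.inv_eq_iff_eq, eq_comm (a := w)]
  constructor
  · rintro ⟨-, h⟩
    exact h
  · rintro (rfl | rfl)
    · exact ⟨hG w hw, Or.inl rfl⟩
    · exact ⟨(hG x (apply_mem_support.mp hw)).symm, Or.inr rfl⟩

theorem subgraphOfPerm_connected {c : Perm V} (hc : c.IsCycle)
    (hG : ∀ x ∈ c.support, G.Adj x (c x)) : (G.subgraphOfPerm c).Connected := by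
  obtain ⟨a, ha, -⟩ := id hc
  have ha' : a ∈ c.support := Perm.mem_support.mpr ha
  have hadj : ∀ n : ℕ, (G.subgraphOfPerm c).Adj ((c ^ n) a) ((c ^ (n + 1)) a) := fun n => by
    rw [pow_succ', Perm.mul_apply]
    exact ⟨hG _ (pow_apply_mem_support.mpr ha'), Or.inl rfl⟩
  have hreach : ∀ n : ℕ, (G.subgraphOfPerm c).coe.Reachable ⟨a, ha'⟩
      ⟨(c ^ n) a, pow_apply_mem_support.mpr ha'⟩ := by
    intro n
    induction n with
    | zero => rfl
    | succ n ih => exact ih.trans (Adj.reachable (hadj n))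
  rw [Subgraph.connected_iff]
  refine ⟨⟨fun ⟨x, hx⟩ ⟨y, hy⟩ => ?_⟩, ⟨a, ha'⟩⟩
  obtain ⟨m, rfl⟩ := hc.exists_pow_eq ha (Perm.mem_support.mp hx)
  obtain ⟨n, rfl⟩ := hc.exists_pow_eq ha (Perm.mem_support.mp hy)
  exact (hreach m).symm.trans (hreach n)

theorem isCycleSub_subgraphOfPerm {c : Perm V} (hc : c ∈ G.cyclicPermsThrough v) :
    IsCycleSub G (G.subgraphOfPerm c) := by
  obtain ⟨hcyc, hv, h3, hG⟩ := mem_cyclicPermsThrough.mp hc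
  refine ⟨subgraphOfPerm_connected hcyc hG, ⟨v, hv⟩, fun w hw => ?_⟩
  rw [neighborSet_subgraphOfPerm hG hw, Set.ncard_pair]
  intro h
  exact hcyc.apply_apply_ne h3 hw (by simp [h])

theorem eq_of_subgraphOfPerm_eq {c c' : Perm V} (hc : c ∈ G.cyclicPermsThrough v)
    (hc' : c' ∈ G.cyclicPermsThrough v) (h : G.subgraphOfPerm c' = G.subgraphOfPerm c)
    (hv : c' v = c v) : c' = c := by
  obtain ⟨hcyc, hvc, -, hG⟩ := mem_cyclicPermsThrough.mp hc
  obtain ⟨hcyc', -, h3', hG'⟩ := mem_cyclicPermsThrough.mp hc'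
  have hsupp : c'.support = c.support := Finset.coe_injective (congrArg Subgraph.verts h)
  -- `c' (c x)` is a neighbour of `c x` other than `c'⁻¹ (c x) = x`, so it must be `c (c x)`
  have hstep : ∀ x ∈ c.support, c' x = c x → c' (c x) = c (c x) := by
    intro x hx hx'
    have hy : c x ∈ c.support := apply_mem_support.mpr hx
    have hmem : c' (c x) ∈ (G.subgraphOfPerm c).neighborSet (c x) :=
      h ▸ ⟨hG' _ (hsupp ▸ hy), Or.inl rfl⟩
    rw [neighborSet_subgraphOfPerm hG hy] at hmem
    rcases hmem with h1 | h1
    · exact h1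
    · rw [show c⁻¹ (c x) = x by simp, ← hx'] at h1
      exact absurd h1 (hcyc'.apply_apply_ne h3' (hsupp ▸ hx))
  have hpow : ∀ n : ℕ, c' ((c ^ n) v) = c ((c ^ n) v) := by
    intro n
    induction n with
    | zero => exact hv
    | succ n ih =>
      rw [pow_succ', Perm.mul_apply]
      exact hstep _ (pow_apply_mem_support.mpr hvc) ih
  ext x
  by_cases hx : x ∈ c.support
  · obtain ⟨n, rfl⟩ := hcyc.exists_pow_eq (Perm.mem_support.mp hvc) (Perm.mem_support.mp hx)
    exact hpow n
  · rw [notMem_support.mp hx, notMem_support.mp (hsupp ▸ hx)]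

theorem eq_or_eq_inv_of_subgraphOfPerm_eq {c c' : Perm V} (hc : c ∈ G.cyclicPermsThrough v)
    (hc' : c' ∈ G.cyclicPermsThrough v) (h : G.subgraphOfPerm c' = G.subgraphOfPerm c) :
    c' = c ∨ c' = c⁻¹ := by
  obtain ⟨-, hv, -, hG⟩ := mem_cyclicPermsThrough.mp hc
  obtain ⟨-, hv', -, hG'⟩ := mem_cyclicPermsThrough.mp hc'
  have hmem : c' v ∈ (G.subgraphOfPerm c).neighborSet v := h ▸ ⟨hG' v hv', Or.inl rfl⟩
  rw [neighborSet_subgraphOfPerm hG hv] at hmem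
  rcases hmem with h1 | h1
  · exact Or.inl (eq_of_subgraphOfPerm_eq hc hc' h h1)
  · exact Or.inr (eq_of_subgraphOfPerm_eq (inv_mem_cyclicPermsThrough hc) hc'
      (h.trans (subgraphOfPerm_inv c).symm) h1)

theorem exists_mem_cyclicPermsThrough_subgraphOfPerm_eq {C : G.Subgraph} (hC : IsCycleSub G C)
    (hv : v ∈ C.verts) : ∃ c ∈ G.cyclicPermsThrough v, G.subgraphOfPerm c = C := by
  obtain ⟨hconn, -, hdeg⟩ := hC
  have hcycles : C.spanningCoe.IsCycles := fun w ⟨x, hx⟩ => hdeg w (C.edge_vert hx)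
  have hnbr : (C.spanningCoe.neighborSet v).Nonempty :=
    Set.nonempty_of_ncard_ne_zero (show (C.neighborSet v).ncard ≠ 0 by rw [hdeg v hv]; norm_num)
  obtain ⟨p, hp, -⟩ := hcycles.exists_cycle_toSubgraph_verts_eq_connectedComponentSupp
    (c := C.spanningCoe.connectedComponentMk v) rfl hnbr
  set c := p.support.tail.formPerm
  have hnodup := hp.support_nodup
  have hlen : p.support.tail.length = p.length := by simp
  have h3 := hp.three_le_length
  have hsupp : c.support = p.support.tail.toFinset :=
    List.support_formPerm_of_nodup _ hnodup fun x hx => by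
      have := congrArg List.length hx
      simp only [hlen, List.length_singleton] at this
      omega
  have hadj : ∀ x ∈ c.support, C.Adj x (c x) := fun x hx =>
    hp.adj_formPerm_support_tail x (List.mem_toFinset.mp (hsupp ▸ hx))
  have hvc : v ∈ c.support := hsupp ▸ List.mem_toFinset.mpr (p.end_mem_tail_support hp.not_nil)
  have hmem : c ∈ G.cyclicPermsThrough v := mem_cyclicPermsThrough.mpr
    ⟨List.isCycle_formPerm hnodup (by omega), hvc,
      by rw [hsupp, List.toFinset_card_of_nodup hnodup]; omega, fun x hx => (hadj x hx).adj_sub⟩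
  have hle : G.subgraphOfPerm c ≤ C := by
    refine ⟨fun x hx => (hadj x hx).fst_mem, fun a b ⟨hab, h⟩ => ?_⟩
    rcases h with rfl | rfl
    · exact hadj a (Perm.mem_support.mpr hab.ne')
    · exact (hadj b (Perm.mem_support.mpr hab.ne)).symm
  refine ⟨c, hmem, Subgraph.eq_of_le_of_ncard_neighborSet_le hle hconn ⟨v, hvc⟩ fun w hw => ?_⟩
  rw [hdeg w (hle.1 hw), (isCycleSub_subgraphOfPerm hmem).2.2 w hw]

theorem sum_cyclicPermsThrough {M : Type*} [AddCommMonoid M] (F : Set V → M) :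
    ∑ c ∈ G.cyclicPermsThrough v, F ↑c.support =
      2 • ∑ᶠ C ∈ {C : G.Subgraph | IsCycleSub G C ∧ v ∈ C.verts}, F C.verts := by
  have himage : ((G.cyclicPermsThrough v).image G.subgraphOfPerm : Set G.Subgraph) =
      {C | IsCycleSub G C ∧ v ∈ C.verts} := by
    ext C
    simp only [coe_image, Set.mem_image, mem_coe, Set.mem_ofPred_eq]
    constructor
    · rintro ⟨c, hc, rfl⟩
      exact ⟨isCycleSub_subgraphOfPerm hc, (mem_cyclicPermsThrough.mp hc).2.1⟩
    · rintro ⟨hC, hv⟩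
      exact exists_mem_cyclicPermsThrough_subgraphOfPerm_eq hC hv
  rw [← himage, finsum_mem_coe_finset, smul_sum]
  refine (sum_image' _ fun c hc => ?_).symm
  obtain ⟨hcyc, hv, h3, -⟩ := mem_cyclicPermsThrough.mp hc
  have hne : c ≠ c⁻¹ := fun h => hcyc.apply_apply_ne h3 hv (by nth_rewrite 1 [h]; simp)
  have hfiber : {c' ∈ G.cyclicPermsThrough v | G.subgraphOfPerm c' = G.subgraphOfPerm c} =
      {c, c⁻¹} := by
    ext c'
    simp only [mem_filter, mem_insert, mem_singleton]
    constructor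
    · rintro ⟨hc', h⟩
      exact eq_or_eq_inv_of_subgraphOfPerm_eq hc hc' h
    · rintro (rfl | rfl)
      · exact ⟨hc, rfl⟩
      · exact ⟨inv_mem_cyclicPermsThrough hc, subgraphOfPerm_inv c⟩
  rw [hfiber, sum_pair hne, support_inv, two_nsmul]
  rfl

variable [DecidableRel G.Adj]

theorem sum_transpositions_eq_sum_neighborFinset {M : Type*} [AddCommMonoid M]
    (F : Set V → M) :
    ∑ c : Perm V with ((c.IsCycle ∧ v ∈ c.support) ∧ ∀ x ∈ c.support, G.Adj x (c x)) ∧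
        #c.support = 2, F ↑c.support =
      ∑ u ∈ G.neighborFinset v, F {u, v} := by
  have himage : ({c : Perm V | ((c.IsCycle ∧ v ∈ c.support) ∧
      ∀ x ∈ c.support, G.Adj x (c x)) ∧ #c.support = 2} : Finset (Perm V)) =
      (G.neighborFinset v).image (swap v) := by
    ext c
    simp only [mem_filter, mem_univ, true_and, mem_image, mem_neighborFinset]
    constructor
    · rintro ⟨⟨⟨-, hv⟩, hG⟩, h2⟩
      obtain ⟨x, y, hxy, rfl⟩ := card_support_eq_two.mp h2
      have hmem : ∀ z, z ∈ (swap x y).support ↔ z = x ∨ z = y := by simp [support_swap hxy]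
      rcases (hmem v).mp hv with rfl | rfl
      · exact ⟨y, by simpa using hG v hv, rfl⟩
      · exact ⟨x, by simpa using hG v hv, swap_comm _ _⟩
    · rintro ⟨u, hu, rfl⟩
      refine ⟨⟨⟨isCycle_swap hu.ne, by simp [support_swap hu.ne]⟩, fun x hx => ?_⟩,
        card_support_swap hu.ne⟩
      rw [support_swap hu.ne, mem_insert, mem_singleton] at hx
      rcases hx with rfl | rfl
      · simpa using hu
      · simpa using hu.symm
  have hinj : Set.InjOn (swap v) (G.neighborFinset v) := fun a _ b _ h => by
    simpa using congrArg (fun σ : Perm V => σ v) h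
  rw [himage, sum_image hinj]
  refine sum_congr rfl fun u hu => ?_
  rw [support_swap (G.ne_of_adj ((mem_neighborFinset G v u).mp hu)), coe_pair, Set.pair_comm]

theorem sum_isCycle_adj_eq {M : Type*} [AddCommMonoid M] (F : Set V → M) :
    ∑ c : Perm V with (c.IsCycle ∧ v ∈ c.support) ∧ ∀ x ∈ c.support, G.Adj x (c x),
        F ↑c.support =
      ∑ u ∈ G.neighborFinset v, F {u, v} +
        2 • ∑ᶠ C ∈ {C : G.Subgraph | IsCycleSub G C ∧ v ∈ C.verts}, F C.verts := by
  rw [← sum_filter_add_sum_filter_not _ (fun c => #c.support = 2), filter_filter,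
    filter_filter, sum_transpositions_eq_sum_neighborFinset, ← sum_cyclicPermsThrough]
  congr 2
  ext c
  simp only [mem_filter, mem_univ, true_and, mem_cyclicPermsThrough]
  constructor
  · rintro ⟨⟨⟨hc, hv⟩, hG⟩, h2⟩
    exact ⟨hc, hv, by have := hc.two_le_card_support; omega, hG⟩
  · rintro ⟨hc, hv, h3, hG⟩
    exact ⟨⟨⟨hc, hv⟩, hG⟩, by omega⟩

theorem prod_adjMatrix_apply {R : Type*} [CommSemiring R] (f : V → V) (s : Finset V) :
    ∏ i ∈ s, G.adjMatrix R (f i) i = if ∀ i ∈ s, G.Adj i (f i) then 1 else 0 := by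
  simp only [adjMatrix_apply, G.adj_comm (f _), prod_boole]
  congr

end SimpleGraph

theorem adjacency_charpoly_vertex_recursion
    {V : Type*} [Fintype V] [DecidableEq V]
    (G : SimpleGraph V) [DecidableRel G.Adj] (v : V) :
    phi (G.adjMatrix (Polynomial ℤ)) =
      Polynomial.X * phi (delSub (G.adjMatrix (Polynomial ℤ)) {v})
        - ∑ u ∈ G.neighborFinset v, phi (delSub (G.adjMatrix (Polynomial ℤ)) {u, v})
        - 2 * ∑ᶠ C ∈ {C : G.Subgraph | IsCycleSub G C ∧ v ∈ C.verts},
          phi (delSub (G.adjMatrix (Polynomial ℤ)) C.verts) := by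
  set A := G.adjMatrix (Polynomial ℤ)
  have hcycles : ∑ c : Equiv.Perm V with c.IsCycle ∧ v ∈ c.support,
      (∏ i ∈ c.support, A (c i) i) * phi (delSub A ↑c.support) =
      ∑ c : Equiv.Perm V with (c.IsCycle ∧ v ∈ c.support) ∧ ∀ x ∈ c.support, G.Adj x (c x),
        (fun S => phi (delSub A S)) ↑c.support := by
    simp only [sum_filter, A, SimpleGraph.prod_adjMatrix_apply, ite_mul, one_mul, zero_mul,
      ite_and]
    refine sum_congr rfl fun c _ => ?_
    split_ifs
    · exact Matrix.phi_delSub_congr A rfl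
    all_goals rfl
  have hneighbors : ∑ u ∈ G.neighborFinset v, phi (delSub A {u, v}) =
      ∑ u ∈ G.neighborFinset v, (fun S => phi (delSub A S)) {u, v} :=
    sum_congr rfl fun _ _ => Matrix.phi_delSub_congr A rfl
  rw [Matrix.phi_eq_sub_sum_isCycle A v, hcycles,
    SimpleGraph.sum_isCycle_adj_eq (fun S => phi (delSub A S)), hneighbors,
    show A v v = 0 by simp [A], sub_zero, sub_sub, two_nsmul, two_mul]
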